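/- arXiv:2008.00066 — 3 statements merged into one kernel-verified Lean document; each statement's English description precedes it below -/
import Mathlib

section
/- Let G be a group, a, b ∈ G with a·b·a = b·a·b, and set x := a², y := b², z := b·a²·b⁻¹. Assume that y and z commute. Then for every integer m: a^(2m+1) · b^(2m+1) = (a·b)·(z·y)^m. (This is the first hexagon relation σ₁x₁₂^m·σ₂x₂₃^m = σ₁σ₂(x₁₃x₂₃)^m in the Abelian setting.) -/
theorem stmt_11 (G : Type*) [Group G] (a b : G) (h : a*b*a = b*a*b)
    (hcomm : Commute (b^2) (b*a^2*b⁻¹)) :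
    ∀ m : ℤ, a^(2*m+1) * b^(2*m+1) = (a*b) * ((b*a^2*b⁻¹) * b^2)^m := by
  intro m
  have h1 := hcomm.eq
  have hc : Commute (a^2 : G) (b^2) := by
    show a^2 * b^2 = b^2 * a^2
    calc a^2*b^2 = b⁻¹ * ((b*a^2*b⁻¹) * b^2) * b := by group
    _ = b⁻¹ * (b^2 * (b*a^2*b⁻¹)) * b := by rw [h1]
    _ = b^2 * a^2 := by group
  have hz : ((b*a^2*b⁻¹) * b^2)^m = b * (a^2)^m * b⁻¹ * (b^2)^m := by
    rw [hcomm.symm.mul_zpow]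
    congr 1
    exact conj_zpow ..
  have hx : a^(2*m+1) = (a^2)^m * a := by
    rw [zpow_add, zpow_one, zpow_mul]
    norm_cast
  have hy : b^(2*m+1) = (b^2)^m * b := by
    rw [zpow_add, zpow_one, zpow_mul]
    norm_cast
  rw [hx, hy, hz]
  have hXb2 : (a^2:G)^m * b^2 = b^2 * (a^2)^m := (hc.zpow_left m).eq
  have hYb : (b^2:G)^m * b = b * (b^2)^m :=
    (((Commute.refl b).pow_right 2).zpow_right m).eq.symm
  have haX : (a^2:G)^m * a = a * (a^2)^m :=
    (((Commute.refl a).pow_right 2).zpow_right m).eq.symm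
  set X := (a^2:G)^m with hXdef
  set Y := (b^2:G)^m with hYdef
  calc X * a * (Y * b)
      = a * X * (Y * b) := by rw [haX]
    _ = a * X * (b * Y) := by rw [hYb]
    _ = a * (X * b^2) * b⁻¹ * Y := by group
    _ = a * (b^2 * X) * b⁻¹ * Y := by rw [hXb2]
    _ = a * b * (b * X * b⁻¹ * Y) := by rw [pow_two]; group
end

section
/- Let G be a group, a, b ∈ G with a·b·a = b·a·b, and set x := a², y := b², z := b·a²·b⁻¹. Assume that x and z commute. Then for every integer m: b^(2m+1) · a^(2m+1) = (b·a)·(x·z)^m. (This is the second hexagon relation σ₂x₂₃^m·σ₁x₁₂^m = σ₂σ₁(x₁₂x₁₃)^m in the Abelian setting.) -/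
theorem stmt_12 (G : Type*) [Group G] (a b : G) (h : a*b*a = b*a*b)
    (hcomm : Commute (a^2) (b*a^2*b⁻¹)) :
    ∀ m : ℤ, b^(2*m+1) * a^(2*m+1) = (b*a) * (a^2 * (b*a^2*b⁻¹))^m := by
  have hz : b*a^2*b⁻¹ = a⁻¹*b^2*a := by
    have key : b^2*a*b = a*b*a^2 := by
      calc b^2*a*b = b*(b*a*b) := by simp [pow_two, mul_assoc]
        _ = b*(a*b*a) := by rw [h]
        _ = (b*a*b)*a := by simp [mul_assoc]
        _ = (a*b*a)*a := by rw [h]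
        _ = a*b*a^2 := by simp [pow_two, mul_assoc]
    have := congrArg (fun g => a⁻¹*g*b⁻¹) key
    simp only [mul_assoc, inv_mul_cancel_left, mul_inv_cancel, mul_one] at this
    simpa [mul_assoc] using this.symm
  have hab2 : Commute (a^2) (b^2) := by
    rw [hz] at hcomm
    have e := hcomm.eq
    simp only [pow_two, mul_assoc] at e
    have h2 := congrArg (fun g => a*g*a⁻¹) e
    simp only [mul_assoc, mul_inv_cancel_left, inv_mul_cancel_left,
      mul_inv_cancel, inv_mul_cancel, mul_one] at h2
    unfold Commute SemiconjBy
    simpa [pow_two, mul_assoc] using h2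
  intro m
  have hx : (a^2)^m = a^(2*m) := by
    rw [← zpow_natCast a 2, ← zpow_mul]; norm_num
  have hy : (b^2)^m = b^(2*m) := by
    rw [← zpow_natCast b 2, ← zpow_mul]; norm_num
  have habm : Commute (a^(2*m)) (b^(2*m)) := by
    have := (hab2.zpow_left m).zpow_right m
    rwa [hx, hy] at this
  rw [(hcomm).mul_zpow, hz]
  have hzz : (a⁻¹*b^2*a)^m = a⁻¹*b^(2*m)*a := by
    have : (a⁻¹*b^2*(a⁻¹)⁻¹)^m = a⁻¹*(b^2)^m*(a⁻¹)⁻¹ := conj_zpow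
    simpa [hy] using this
  rw [hx, hzz]
  calc b^(2*m+1) * a^(2*m+1) = b*(b^(2*m)*a^(2*m))*a := by
        rw [zpow_add_one, zpow_add_one, ← mul_assoc, ← mul_assoc,
          (Commute.zpow_self b (2*m)).eq]
    _ = b*(a^(2*m)*b^(2*m))*a := by rw [habm.eq]
    _ = b*a*(a^(2*m)*(a⁻¹*b^(2*m)*a)) := by
        simp only [mul_assoc]
        rw [← mul_assoc a, (Commute.self_zpow a (2*m)).eq]
        simp [mul_assoc]
end

section
/- Let F₂ be the free group on two generators x and y. For m ∈ ℤ and f ∈ F₂, let E(m, f) : F₂ → F₂ be the group homomorphism determined by x ↦ x^(2m+1) and y ↦ f⁻¹ · y^(2m+1) · f. Then for all m₁, m₂ ∈ ℤ and f₁, f₂ ∈ F₂: E(m₂, f₂) ∘ E(m₁, f₁) = E(2m₁m₂ + m₁ + m₂, f₂ · E(m₂, f₂)(f₁)). -/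
/-- The endomorphism of the free group on two generators `x = FreeGroup.of false`,
`y = FreeGroup.of true` determined by `x ↦ x^(2m+1)`, `y ↦ f⁻¹ y^(2m+1) f`. -/
def E (m : ℤ) (f : FreeGroup Bool) : FreeGroup Bool →* FreeGroup Bool :=
  FreeGroup.lift (fun b => if b then f⁻¹ * (FreeGroup.of true)^(2*m+1) * f
                           else (FreeGroup.of false)^(2*m+1))

theorem stmt_13 (m₁ m₂ : ℤ) (f₁ f₂ : FreeGroup Bool) :
    (E m₂ f₂).comp (E m₁ f₁) =
      E (2*m₁*m₂ + m₁ + m₂) (f₂ * (E m₂ f₂) f₁) := by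
  have hE : ∀ (m : ℤ) (f : FreeGroup Bool) (b : Bool),
      E m f (FreeGroup.of b) = if b then f⁻¹ * (FreeGroup.of true)^(2*m+1) * f
        else (FreeGroup.of false)^(2*m+1) := fun m f b => FreeGroup.lift_apply_of
  have hconj : ∀ (f t : FreeGroup Bool) (k : ℤ), (f⁻¹ * t * f)^k = f⁻¹ * t^k * f := by
    intro f t k
    have := map_zpow (MulAut.conj f⁻¹) t k
    simpa [MulAut.conj_apply] using this.symm
  have hm : (2*m₂+1) * (2*m₁+1) = 2*(2*m₁*m₂ + m₁ + m₂)+1 := by ring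
  apply FreeGroup.ext_hom
  intro b
  rw [MonoidHom.comp_apply, hE, hE]
  cases b
  · simp only [if_false, Bool.false_eq_true, map_zpow, hE, ← zpow_mul, hm]
  · simp only [if_true, map_mul, map_inv, map_zpow, hE, hconj, ← zpow_mul, hm,
      mul_inv_rev, inv_inv]
    group
end
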